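/- Let A be a finite set and softmax : (A → ℝ) → (A → ℝ) be defined by softmax(P)(a) = exp(P(a)) / ∑_{a'∈A} exp(P(a')). Then for any P, Q : A → ℝ and any a ∈ A, |softmax(P)(a) − softmax(Q)(a)| ≤ ∑_{a'∈A} |P(a') − Q(a')|. -/
import Mathlib

noncomputable def softmax {A : Type*} [Fintype A] (P : A → ℝ) (a : A) : ℝ :=
  Real.exp (P a) / ∑ a' : A, Real.exp (P a')

lemma abs_exp_sub_exp_le (x y : ℝ) :
    |Real.exp x - Real.exp y| ≤ max (Real.exp x) (Real.exp y) * |x - y| := by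
  wlog h : y ≤ x
  · rw [abs_sub_comm, abs_sub_comm x y, max_comm]
    exact this y x (le_of_not_ge h)
  rw [abs_of_nonneg (sub_nonneg.2 (Real.exp_le_exp.2 h)), abs_of_nonneg (sub_nonneg.2 h),
    max_eq_left (Real.exp_le_exp.2 h)]
  have h3 : Real.exp x * Real.exp (y - x) = Real.exp y := by
    rw [← Real.exp_add]; ring_nf
  nlinarith [mul_le_mul_of_nonneg_left (Real.add_one_le_exp (y - x)) (Real.exp_pos x).le]

theorem softmax_lipschitz {A : Type*} [Fintype A] [Nonempty A]
    (P Q : A → ℝ) (a : A) :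
    |softmax P a - softmax Q a| ≤ ∑ a' : A, |P a' - Q a'| := by
  classical
  set SP : ℝ := ∑ a' : A, Real.exp (P a') with hSP
  set SQ : ℝ := ∑ a' : A, Real.exp (Q a') with hSQ
  have hSPpos : 0 < SP := Finset.sum_pos (fun i _ => Real.exp_pos _) Finset.univ_nonempty
  have hSQpos : 0 < SQ := Finset.sum_pos (fun i _ => Real.exp_pos _) Finset.univ_nonempty
  have key : softmax P a - softmax Q a
      = (∑ a' ∈ Finset.univ.erase a,
          (Real.exp (P a + Q a') - Real.exp (Q a + P a'))) / (SP * SQ) := by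
    unfold softmax
    rw [div_sub_div _ _ hSPpos.ne' hSQpos.ne']
    congr 1
    have : Real.exp (P a) * SQ - SP * Real.exp (Q a)
        = ∑ a' : A, (Real.exp (P a + Q a') - Real.exp (Q a + P a')) := by
      rw [hSP, hSQ, Finset.mul_sum, Finset.sum_mul, ← Finset.sum_sub_distrib]
      exact Finset.sum_congr rfl (fun i _ => by rw [Real.exp_add, Real.exp_add]; ring)
    rw [this, ← Finset.add_sum_erase _ _ (Finset.mem_univ a), add_comm (Q a) (P a),
      sub_self, zero_add]
  rw [key, abs_div, abs_of_pos (mul_pos hSPpos hSQpos),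
    div_le_iff₀ (mul_pos hSPpos hSQpos)]
  have heP : Real.exp (P a) ≤ SP := Finset.single_le_sum (fun i _ => (Real.exp_pos _).le)
    (Finset.mem_univ a)
  have heQ : Real.exp (Q a) ≤ SQ := Finset.single_le_sum (fun i _ => (Real.exp_pos _).le)
    (Finset.mem_univ a)
  calc |∑ a' ∈ Finset.univ.erase a, (Real.exp (P a + Q a') - Real.exp (Q a + P a'))|
      ≤ ∑ a' ∈ Finset.univ.erase a,
          |Real.exp (P a + Q a') - Real.exp (Q a + P a')| := Finset.abs_sum_le_sum_abs _ _
    _ ≤ ∑ a' ∈ Finset.univ.erase a,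
          ((Real.exp (P a + Q a') + Real.exp (Q a + P a')) * |P a - Q a|
            + SP * SQ * |P a' - Q a'|) := by
        apply Finset.sum_le_sum
        intro a' _
        have h1 := abs_exp_sub_exp_le (P a + Q a') (Q a + P a')
        have h2 : |(P a + Q a') - (Q a + P a')| ≤ |P a - Q a| + |P a' - Q a'| := by
          have : (P a + Q a') - (Q a + P a') = (P a - Q a) - (P a' - Q a') := by ring
          rw [this]
          exact abs_sub _ _
        have hmax1 : max (Real.exp (P a + Q a')) (Real.exp (Q a + P a'))
            ≤ Real.exp (P a + Q a') + Real.exp (Q a + P a') :=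
          max_le (le_add_of_nonneg_right (Real.exp_pos _).le)
            (le_add_of_nonneg_left (Real.exp_pos _).le)
        have hmax2 : max (Real.exp (P a + Q a')) (Real.exp (Q a + P a')) ≤ SP * SQ := by
          have hP' : Real.exp (P a') ≤ SP := Finset.single_le_sum
            (fun i _ => (Real.exp_pos _).le) (Finset.mem_univ a')
          have hQ' : Real.exp (Q a') ≤ SQ := Finset.single_le_sum
            (fun i _ => (Real.exp_pos _).le) (Finset.mem_univ a')
          apply max_le
          · rw [Real.exp_add]
            exact mul_le_mul heP hQ' (Real.exp_pos _).le hSPpos.le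
          · rw [Real.exp_add, mul_comm SP SQ]
            exact mul_le_mul heQ hP' (Real.exp_pos _).le hSQpos.le
        calc |Real.exp (P a + Q a') - Real.exp (Q a + P a')|
            ≤ max (Real.exp (P a + Q a')) (Real.exp (Q a + P a'))
              * (|P a - Q a| + |P a' - Q a'|) :=
              h1.trans (mul_le_mul_of_nonneg_left h2 (le_max_iff.2 (Or.inl (Real.exp_pos _).le)))
          _ = max (Real.exp (P a + Q a')) (Real.exp (Q a + P a')) * |P a - Q a|
              + max (Real.exp (P a + Q a')) (Real.exp (Q a + P a')) * |P a' - Q a'| := by ring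
          _ ≤ (Real.exp (P a + Q a') + Real.exp (Q a + P a')) * |P a - Q a|
              + SP * SQ * |P a' - Q a'| := by
              gcongr
    _ = (∑ a' ∈ Finset.univ.erase a, (Real.exp (P a + Q a') + Real.exp (Q a + P a')))
          * |P a - Q a|
        + SP * SQ * ∑ a' ∈ Finset.univ.erase a, |P a' - Q a'| := by
        rw [Finset.sum_add_distrib, ← Finset.sum_mul, ← Finset.mul_sum]
    _ ≤ SP * SQ * |P a - Q a| + SP * SQ * ∑ a' ∈ Finset.univ.erase a, |P a' - Q a'| := by
        gcongr ?_ * _ + _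
        have : ∑ a' ∈ Finset.univ.erase a, (Real.exp (P a + Q a') + Real.exp (Q a + P a'))
            = Real.exp (P a) * (SQ - Real.exp (Q a)) + Real.exp (Q a) * (SP - Real.exp (P a)) := by
          rw [Finset.sum_add_distrib]
          have e1 : ∑ a' ∈ Finset.univ.erase a, Real.exp (P a + Q a')
              = Real.exp (P a) * (SQ - Real.exp (Q a)) := by
            simp_rw [Real.exp_add, ← Finset.mul_sum]
            congr 1
            rw [hSQ, ← Finset.add_sum_erase _ _ (Finset.mem_univ a)]
            ring
          have e2 : ∑ a' ∈ Finset.univ.erase a, Real.exp (Q a + P a')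
              = Real.exp (Q a) * (SP - Real.exp (P a)) := by
            simp_rw [Real.exp_add, ← Finset.mul_sum]
            congr 1
            rw [hSP, ← Finset.add_sum_erase _ _ (Finset.mem_univ a)]
            ring
          rw [e1, e2]
        rw [this]
        nlinarith [mul_nonneg (sub_nonneg.2 heP) (sub_nonneg.2 heQ),
          mul_pos (Real.exp_pos (P a)) (Real.exp_pos (Q a))]
    _ = SP * SQ * (|P a - Q a| + ∑ a' ∈ Finset.univ.erase a, |P a' - Q a'|) := by ring
    _ = (∑ a' : A, |P a' - Q a'|) * (SP * SQ) := by
        rw [← Finset.add_sum_erase _ _ (Finset.mem_univ a), mul_comm]
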